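/- arXiv:math/0611181 — 2 statements merged into one kernel-verified Lean document; each statement's English description precedes it below -/
import Mathlib

section
/- The function f(x,y) = -2Λ(x+y) + 2Λ(y) + Λ(x), where Λ is the Lobachevsky function Λ(θ) = -∫₀^θ log|2 sin t| dt, has a unique critical point in the open triangle {0 < x, 0 < y, x + y < π}, located at (π/2, π/4). -/
open Real

noncomputable def lob (θ : ℝ) : ℝ := -∫ t in (0:ℝ)..θ, Real.log |2 * Real.sin t|

noncomputable def f (x y : ℝ) : ℝ := -2 * lob (x + y) + 2 * lob y + lob x

/-!
By the fundamental theorem of calculus `Λ'(θ) = -log (2 sin θ)` on `(0, π)`, the integrand being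
integrable near `0` as the logarithm of an analytic function. The critical point equations become
`2 log (2 sin (x + y)) = log (2 sin x)` and `sin (x + y) = sin y`. In the triangle the second one
forces `x + 2y = π`; then `sin x = sin 2y` turns the first one into `sin y = cos y`, i.e. `y = π/4`.
-/

lemma intervalIntegrable_log_abs_two_mul_sin (a b : ℝ) :
    IntervalIntegrable (fun t => log |2 * sin t|) MeasureTheory.volume a b :=
  (analyticOnNhd_const.mul analyticOnNhd_sin).meromorphicOn.intervalIntegrable_log_norm

lemma hasDerivAt_lob {θ : ℝ} (hθ : sin θ ≠ 0) : HasDerivAt lob (-log |2 * sin θ|) θ := by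
  have hmeas : Measurable fun t => log |2 * sin t| := by fun_prop
  have hcont : ContinuousAt (fun t => log |2 * sin t|) θ := by
    have : |2 * sin θ| ≠ 0 := by positivity
    fun_prop (disch := assumption)
  exact (intervalIntegral.integral_hasDerivAt_right (intervalIntegrable_log_abs_two_mul_sin 0 θ)
    hmeas.stronglyMeasurable.stronglyMeasurableAtFilter hcont).neg

lemma deriv_f_left {x y : ℝ} (hx : sin x ≠ 0) (hxy : sin (x + y) ≠ 0) :
    deriv (fun x' => f x' y) x = 2 * log |2 * sin (x + y)| - log |2 * sin x| := by
  have h : HasDerivAt (fun x' => f x' y)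
      (-2 * -log |2 * sin (x + y)| + 0 + -log |2 * sin x|) x :=
    ((((hasDerivAt_lob hxy).comp_add_const x y).const_mul (-2)).add
      (hasDerivAt_const x (2 * lob y))).add (hasDerivAt_lob hx)
  rw [h.deriv]
  ring

lemma deriv_f_right {x y : ℝ} (hy : sin y ≠ 0) (hxy : sin (x + y) ≠ 0) :
    deriv (fun y' => f x y') y = 2 * log |2 * sin (x + y)| - 2 * log |2 * sin y| := by
  have h : HasDerivAt (fun y' => f x y')
      (-2 * -log |2 * sin (x + y)| + 2 * -log |2 * sin y| + 0) y :=
    ((((hasDerivAt_lob hxy).comp_const_add x y).const_mul (-2)).add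
      ((hasDerivAt_lob hy).const_mul 2)).add (hasDerivAt_const y (lob x))
  rw [h.deriv]
  ring

lemma log_critical_equations_iff {a b c : ℝ} (ha : 0 < a) (hb : 0 < b) (hc : 0 < c) :
    (2 * log (2 * c) - log (2 * a) = 0 ∧ 2 * log (2 * c) - 2 * log (2 * b) = 0) ↔
      (c = b ∧ 2 * c ^ 2 = a) := by
  have hsq : 2 * log (2 * c) = log ((2 * c) ^ 2) := by rw [log_pow]; push_cast; ring
  have h₁ : 2 * log (2 * c) - log (2 * a) = 0 ↔ 2 * c ^ 2 = a := by
    rw [sub_eq_zero, hsq,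
      log_injOn_pos.eq_iff (Set.mem_Ioi.2 (by positivity)) (Set.mem_Ioi.2 (by positivity))]
    constructor <;> intro h <;> linarith
  have h₂ : 2 * log (2 * c) - 2 * log (2 * b) = 0 ↔ c = b := by
    rw [sub_eq_zero, mul_right_inj' two_ne_zero,
      log_injOn_pos.eq_iff (Set.mem_Ioi.2 (by positivity)) (Set.mem_Ioi.2 (by positivity))]
    constructor <;> intro h <;> linarith
  rw [h₁, h₂, and_comm]

lemma eq_pi_div_two_of_cos_eq_zero {t : ℝ} (h₀ : 0 ≤ t) (hπ : t ≤ π) (h : cos t = 0) :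
    t = π / 2 := by
  rw [← arccos_cos h₀ hπ, h, arccos_zero]

lemma sin_add_eq_sin_iff {x y : ℝ} (hx : 0 < x) (hy : 0 < y) (hxy : x + y < π) :
    sin (x + y) = sin y ↔ x + 2 * y = π := by
  constructor
  · intro h
    have hprod : 2 * sin (x / 2) * cos ((x + 2 * y) / 2) = 0 := by
      rw [← sub_eq_zero.2 h, sin_sub_sin]
      ring_nf
    have hsin : sin (x / 2) ≠ 0 := (sin_pos_of_pos_of_lt_pi (by linarith) (by linarith)).ne'
    have hcos : cos ((x + 2 * y) / 2) = 0 := by simpa [hsin] using hprod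
    linarith [eq_pi_div_two_of_cos_eq_zero (by linarith) (by linarith) hcos]
  · intro h
    rw [show x + y = π - y by linarith, sin_pi_sub]

lemma sin_eq_cos_iff {y : ℝ} (h₀ : 0 < y) (hπ : y < π / 2) : sin y = cos y ↔ y = π / 4 := by
  constructor
  · intro h
    have hcos : cos (2 * y) = 0 := by rw [cos_two_mul', h, sub_self]
    linarith [eq_pi_div_two_of_cos_eq_zero (by linarith) (by linarith) hcos]
  · rintro rfl
    rw [sin_pi_div_four, cos_pi_div_four]

lemma sin_critical_equations_iff {x y : ℝ} (hx : 0 < x) (hy : 0 < y) (hxy : x + y < π) :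
    (sin (x + y) = sin y ∧ 2 * sin (x + y) ^ 2 = sin x) ↔ (x = π / 2 ∧ y = π / 4) := by
  rw [sin_add_eq_sin_iff hx hy hxy]
  constructor
  · rintro ⟨hline, hsq⟩
    have hy' : y < π / 2 := by linarith
    have hsinx : sin x = 2 * sin y * cos y := by
      rw [show x = π - 2 * y by linarith, sin_pi_sub, sin_two_mul]
    rw [(sin_add_eq_sin_iff hx hy hxy).2 hline, hsinx] at hsq
    have hsy : 0 < sin y := sin_pos_of_pos_of_lt_pi hy (by linarith)
    have hsc : sin y = cos y := mul_left_cancel₀ (by positivity : 2 * sin y ≠ 0) (by linarith)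
    have hy4 := (sin_eq_cos_iff hy hy').1 hsc
    exact ⟨by linarith, hy4⟩
  · rintro ⟨rfl, rfl⟩
    refine ⟨by ring, ?_⟩
    rw [(sin_add_eq_sin_iff (by positivity) (by positivity) (by linarith [pi_pos])).2 (by ring),
      sin_pi_div_four, sin_pi_div_two, div_pow, sq_sqrt zero_le_two]
    norm_num

theorem unique_critical_point :
    ∀ x y : ℝ, 0 < x → 0 < y → x + y < π →
      ((deriv (fun x' => f x' y) x = 0 ∧ deriv (fun y' => f x y') y = 0) ↔
        (x = π / 2 ∧ y = π / 4)) := by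
  intro x y hx hy hxy
  have hsx : 0 < sin x := sin_pos_of_pos_of_lt_pi hx (by linarith)
  have hsy : 0 < sin y := sin_pos_of_pos_of_lt_pi hy (by linarith)
  have hsxy : 0 < sin (x + y) := sin_pos_of_pos_of_lt_pi (by linarith) hxy
  rw [deriv_f_left hsx.ne' hsxy.ne', deriv_f_right hsy.ne' hsxy.ne',
    abs_of_pos (by positivity : 0 < 2 * sin x), abs_of_pos (by positivity : 0 < 2 * sin y),
    abs_of_pos (by positivity : 0 < 2 * sin (x + y)), log_critical_equations_iff hsx hsy hsxy]
  exact sin_critical_equations_iff hx hy hxy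
end

section
/- For 0 < x, y with x + y < π, the system of equations 2 sin²(x+y) = sin(x) and sin(x+y) = sin(y) has the unique solution (x,y) = (π/2, π/4). -/
open Real

theorem system_unique_solution :
    ∀ x y : ℝ, 0 < x → 0 < y → x + y < π →
      ((2 * Real.sin (x + y) ^ 2 = Real.sin x ∧ Real.sin (x + y) = Real.sin y) ↔
        (x = π / 2 ∧ y = π / 4)) := by
  intro x y hx hy hxy
  constructor
  · rintro ⟨h1, h2⟩
    have hpi := Real.pi_pos
    -- sin(x+y) - sin y = 0
    have hdiff : 2 * Real.sin (x / 2) * Real.cos ((x + 2 * y) / 2) = 0 := by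
      have := Real.sin_sub_sin (x + y) y
      have h0 : Real.sin (x + y) - Real.sin y = 0 := by linarith
      rw [this] at h0
      have e1 : (x + y - y) / 2 = x / 2 := by ring
      have e2 : (x + y + y) / 2 = (x + 2 * y) / 2 := by ring
      rw [e1, e2] at h0
      linarith
    have hsx2 : 0 < Real.sin (x / 2) := by
      apply Real.sin_pos_of_pos_of_lt_pi <;> linarith
    have hcos : Real.cos ((x + 2 * y) / 2) = 0 := by
      rcases mul_eq_zero.mp hdiff with h | h
      · rcases mul_eq_zero.mp h with h | h
        · norm_num at h
        · linarith
      · exact h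
    have hy' : y < π := by linarith
    -- (x+2y)/2 ∈ (0, π), cos = 0 → = π/2
    have hmid : (x + 2 * y) / 2 = π / 2 := by
      rw [Real.cos_eq_zero_iff] at hcos
      obtain ⟨k, hk⟩ := hcos
      have hlb : 0 < (x + 2 * y) / 2 := by linarith
      have hub : (x + 2 * y) / 2 < π := by linarith
      rw [hk] at hlb hub
      have hk0 : k = 0 := by
        by_contra hk0
        rcases lt_or_gt_of_ne hk0 with hkn | hkp
        · have hki : k ≤ -1 := by omega
          have : (k : ℝ) ≤ -1 := by exact_mod_cast hki
          nlinarith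
        · have : (1 : ℝ) ≤ (k : ℝ) := by exact_mod_cast hkp
          nlinarith
      rw [hk, hk0]
      push_cast
      ring
    have hxval : x + 2 * y = π := by linarith
    have hylt : y < π / 2 := by linarith
    -- sin x = sin (2y), sin(x+y) = sin y
    have hsinx : Real.sin x = Real.sin (2 * y) := by
      have : x = π - 2 * y := by linarith
      rw [this, Real.sin_pi_sub]
    have hsxy : Real.sin (x + y) = Real.sin y := h2
    have hsy : 0 < Real.sin y := Real.sin_pos_of_pos_of_lt_pi hy hy'
    have key : Real.sin y = Real.cos y := by
      have h2y : Real.sin (2 * y) = 2 * Real.sin y * Real.cos y := Real.sin_two_mul y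
      rw [hsxy, hsinx, h2y] at h1
      have : Real.sin y * (Real.sin y - Real.cos y) = 0 := by nlinarith
      rcases mul_eq_zero.mp this with h | h
      · linarith
      · linarith
    have hyv : y = π / 4 := by
      have hcs : Real.cos y = Real.sin (π / 2 - y) := (Real.sin_pi_div_two_sub y).symm
      rw [hcs] at key
      have := Real.injOn_sin (by constructor <;> [linarith; linarith])
        (by constructor <;> [linarith; linarith]) key
      linarith
    exact ⟨by linarith, hyv⟩
  · rintro ⟨hx2, hy2⟩
    subst hx2; subst hy2
    have h34 : π / 2 + π / 4 = π - π / 4 := by ring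
    rw [h34, Real.sin_pi_sub]
    constructor
    · rw [Real.sin_pi_div_four, Real.sin_pi_div_two]
      rw [div_pow]
      rw [Real.sq_sqrt (by norm_num : (2:ℝ) ≥ 0)]
      norm_num
    · rfl
end
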